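/- arXiv:2605.05873 — 2 statements merged into one kernel-verified Lean document; each statement's English description precedes it below -/
import Mathlib

section
/- Let X_1, X_2, ... be i.i.d. draws from a distribution P on a countable set A with masses p_a, and for ε ∈ (0,1) define U_t := min{u ∈ (0,1] : u^{-1}(1-u)^t ≤ ε/3}. Then P(∃ a ∈ A, ∃ t ≥ 1 : N_t(a) = 0 and p_a > U_t) ≤ ε/3, where N_t(a) = #{i ≤ t : X_i = a}. -/
/-!
If `U_t < p_a`, there is `u ∈ (0, 1]` with `u < p_a` and `(1 - u)^t ≤ (ε/3) u`, so the
probability that `a` is missed by the first `t` draws is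
`(1 - p_a)^t ≤ (1 - u)^t ≤ (ε/3) u ≤ (ε/3) p_a`. The events "`a` is missed by the first `t`
draws" decrease in `t`, so for each `a` the bad event has probability at most `(ε/3) p_a`, and a
union bound over the countably many `a` gives `∑ₐ (ε/3) p_a = ε/3`.
-/

open MeasureTheory ProbabilityTheory
open scoped ENNReal

theorem one_sub_pow_le_mul_of_sInf_lt {c p : ℝ} {t : ℕ} (ht : t ≠ 0) (hc : 0 ≤ c) (hp : p ≤ 1)
    (h : sInf {u : ℝ | u ∈ Set.Ioc (0 : ℝ) 1 ∧ u⁻¹ * (1 - u) ^ t ≤ c} < p) :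
    (1 - p) ^ t ≤ c * p := by
  have hone : (1 : ℝ) ∈ {u : ℝ | u ∈ Set.Ioc (0 : ℝ) 1 ∧ u⁻¹ * (1 - u) ^ t ≤ c} :=
    ⟨⟨zero_lt_one, le_rfl⟩, by simpa [zero_pow ht] using hc⟩
  obtain ⟨u, ⟨⟨hu0, hu1⟩, hu⟩, hup⟩ := exists_lt_of_csInf_lt ⟨1, hone⟩ h
  calc (1 - p) ^ t ≤ (1 - u) ^ t := by gcongr
    _ ≤ u * c := (inv_mul_le_iff₀ hu0).mp hu
    _ ≤ c * p := by nlinarith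

theorem ENNReal.one_sub_pow_le_ofReal_mul {q : ℝ≥0∞} {c : ℝ} {t : ℕ} (hq : q ≤ 1) (hc : 0 ≤ c)
    (h : (1 - q.toReal) ^ t ≤ c * q.toReal) : (1 - q) ^ t ≤ ENNReal.ofReal c * q := by
  have hq_top : q ≠ ⊤ := ne_top_of_le_ne_top one_ne_top hq
  have hq_real : q.toReal ≤ 1 := toReal_le_of_le_ofReal zero_le_one (by simpa using hq)
  calc (1 - q) ^ t = ENNReal.ofReal ((1 - q.toReal) ^ t) := by
        rw [ofReal_pow (sub_nonneg.2 hq_real), ofReal_sub _ toReal_nonneg, ofReal_one,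
          ofReal_toReal hq_top]
    _ ≤ ENNReal.ofReal (c * q.toReal) := ofReal_le_ofReal h
    _ = ENNReal.ofReal c * q := by rw [ofReal_mul hc, ofReal_toReal hq_top]

theorem tsum_measure_fiber_eq_one {Ω α : Type*} {m : MeasurableSpace Ω}
    [MeasurableSpace α] [MeasurableSingletonClass α] [Countable α]
    {μ : Measure Ω} [IsProbabilityMeasure μ] {Y : Ω → α} (hY : AEMeasurable Y μ) :
    ∑' a, μ {ω | Y ω = a} = 1 := by
  have := Measure.isProbabilityMeasure_map (μ := μ) hY
  simpa [Measure.map_apply_of_aemeasurable hY (measurableSet_singleton _), Set.preimage,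
    Set.indicator_univ] using
    Measure.tsum_indicator_apply_singleton (μ.map Y) Set.univ MeasurableSet.univ

section IID

variable {Ω α : Type*} {m : MeasurableSpace Ω} [MeasurableSpace α] [MeasurableSingletonClass α]
  {μ : Measure Ω} [IsProbabilityMeasure μ] {X : ℕ → Ω → α}

theorem measure_forall_lt_ne_eq_one_sub_pow (hindep : iIndepFun X μ)
    (hident : ∀ i, IdentDistrib (X i) (X 0) μ μ) (a : α) (t : ℕ) :
    μ {ω | ∀ i < t, X i ω ≠ a} = (1 - μ {ω | X 0 ω = a}) ^ t := by
  have hset : {ω | ∀ i < t, X i ω ≠ a} = ⋂ i ∈ Finset.range t, X i ⁻¹' {a}ᶜ := by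
    ext ω; simp
  have hfactor : ∀ i, μ (X i ⁻¹' {a}ᶜ) = 1 - μ {ω | X 0 ω = a} := fun i => by
    rw [Set.preimage_compl, prob_compl_eq_one_sub₀
        ((hident i).aemeasurable_fst.nullMeasurableSet_preimage (measurableSet_singleton a)),
      (hident i).measure_mem_eq (measurableSet_singleton a)]
    rfl
  rw [hset, hindep.meas_biInter fun i _ => ⟨{a}ᶜ, (measurableSet_singleton a).compl, rfl⟩,
    Finset.prod_congr rfl fun i _ => hfactor i, Finset.prod_const, Finset.card_range]

theorem measure_exists_forall_lt_ne_le (hindep : iIndepFun X μ)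
    (hident : ∀ i, IdentDistrib (X i) (X 0) μ μ) (a : α) {P : ℕ → Prop} {b : ℝ≥0∞}
    (hb : ∀ t, P t → (1 - μ {ω | X 0 ω = a}) ^ t ≤ b) :
    μ {ω | ∃ t, P t ∧ ∀ i < t, X i ω ≠ a} ≤ b := by
  classical
  by_cases hP : ∃ t, P t
  · calc μ {ω | ∃ t, P t ∧ ∀ i < t, X i ω ≠ a}
        ≤ μ {ω | ∀ i < Nat.find hP, X i ω ≠ a} :=
          measure_mono fun ω ⟨t, hPt, hω⟩ i hi => hω i (hi.trans_le (Nat.find_min' hP hPt))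
      _ = (1 - μ {ω | X 0 ω = a}) ^ Nat.find hP :=
          measure_forall_lt_ne_eq_one_sub_pow hindep hident a _
      _ ≤ b := hb _ (Nat.find_spec hP)
  · simp only [not_exists] at hP
    simp [hP]

theorem measure_unseen_of_sInf_lt_le (hindep : iIndepFun X μ)
    (hident : ∀ i, IdentDistrib (X i) (X 0) μ μ) (a : α) {c : ℝ} (hc : 0 ≤ c) :
    μ {ω | ∃ t : ℕ, 1 ≤ t ∧ (∀ i < t, X i ω ≠ a) ∧
        sInf {u : ℝ | u ∈ Set.Ioc (0 : ℝ) 1 ∧ u⁻¹ * (1 - u) ^ t ≤ c} <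
          (μ {ω' | X 0 ω' = a}).toReal} ≤
      ENNReal.ofReal c * μ {ω | X 0 ω = a} := by
  set U : ℕ → ℝ := fun t => sInf {u : ℝ | u ∈ Set.Ioc (0 : ℝ) 1 ∧ u⁻¹ * (1 - u) ^ t ≤ c}
  calc _ ≤ μ {ω | ∃ t, (1 ≤ t ∧ U t < (μ {ω' | X 0 ω' = a}).toReal) ∧ ∀ i < t, X i ω ≠ a} :=
        measure_mono <| by rintro ω ⟨t, ht, hω, hU⟩; exact ⟨t, ⟨ht, hU⟩, hω⟩
    _ ≤ _ := measure_exists_forall_lt_ne_le hindep hident a fun t ⟨ht, hU⟩ =>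
        ENNReal.one_sub_pow_le_ofReal_mul prob_le_one hc
          (one_sub_pow_le_mul_of_sInf_lt (by omega) hc
            (ENNReal.toReal_le_of_le_ofReal zero_le_one (by simpa using prob_le_one)) hU)

end IID

theorem stmt_8_general {Ω α : Type*} {m : MeasurableSpace Ω}
    [MeasurableSpace α] [MeasurableSingletonClass α] [Countable α]
    (μ : Measure Ω) [IsProbabilityMeasure μ]
    (X : ℕ → Ω → α)
    (hindep : iIndepFun X μ)
    (hident : ∀ i, IdentDistrib (X i) (X 0) μ μ)
    (ε : ℝ) (hε : ε ∈ Set.Ioo (0 : ℝ) 1) :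
    μ {ω | ∃ a : α, ∃ t : ℕ, 1 ≤ t ∧ (∀ i < t, X i ω ≠ a) ∧
        sInf {u : ℝ | u ∈ Set.Ioc (0 : ℝ) 1 ∧ u⁻¹ * (1 - u) ^ t ≤ ε / 3} <
          (μ {ω' | X 0 ω' = a}).toReal} ≤
      ENNReal.ofReal (ε / 3) := by
  have hc : 0 ≤ ε / 3 := by linarith [hε.1]
  rw [Set.ofPred_exists]
  calc _ ≤ ∑' a, ENNReal.ofReal (ε / 3) * μ {ω | X 0 ω = a} :=
        (measure_iUnion_le _).trans
          (ENNReal.tsum_le_tsum fun a => measure_unseen_of_sInf_lt_le hindep hident a hc)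
    _ = ENNReal.ofReal (ε / 3) := by
        rw [ENNReal.tsum_mul_left, tsum_measure_fiber_eq_one (hident 0).aemeasurable_fst,
          mul_one]

theorem stmt_8 {Ω α : Type*} {m : MeasurableSpace Ω}
    [MeasurableSpace α] [MeasurableSingletonClass α] [Countable α]
    (μ : Measure Ω) [IsProbabilityMeasure μ]
    (X : ℕ → Ω → α) (hX : ∀ i, Measurable (X i))
    (hindep : iIndepFun X μ)
    (hident : ∀ i, IdentDistrib (X i) (X 0) μ μ)
    (ε : ℝ) (hε : ε ∈ Set.Ioo (0 : ℝ) 1) :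
    μ {ω | ∃ a : α, ∃ t : ℕ, 1 ≤ t ∧ (∀ i < t, X i ω ≠ a) ∧
        sInf {u : ℝ | u ∈ Set.Ioc (0 : ℝ) 1 ∧ u⁻¹ * (1 - u) ^ t ≤ ε / 3} <
          (μ {ω' | X 0 ω' = a}).toReal} ≤
      ENNReal.ofReal (ε / 3) :=
  stmt_8_general (m := m) μ X hindep hident ε hε
end

section
/- Let X_1, X_2, ... be i.i.d. on a countable set A with masses p_a, and for each a and t let N_t(a) = #{i≤t : X_i = a}. Fix r ∈ A and let p_{(2)} = sup_{a≠r} p_a. Then for every integer t ≥ 1, E[max_{a≠r} N_t(a)] ≤ t·p_{(2)} + 2√(2t·log(t+1)). -/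
/-
Exponential-moment argument. Write `N_a` for the number of visits to `a` before time `t`, `M`
for their supremum over `a ≠ r`, and `u = e^λ - 1`. Since only finitely many values occur, the
supremum is attained, so `e^{λM} - 1 ≤ ∑_{a ≠ r} (e^{λ N_a} - 1)`. Each `N_a` is binomial, with
`E e^{λ N_a} - 1 = (1 + p_a u)^t - 1 ≤ t p_a u e^{t p u}`, and the masses `p_a` sum to at most
one, so `E e^{λM} ≤ 1 + t u e^{t p u} ≤ (t + 1) e^{t p u}` as soon as `u ≤ 1`. Jensen's inequality
gives `λ E M ≤ log (t + 1) + t p u`, and `λ = √(log (t + 1) / (2t))` turns this into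
`E M ≤ t p + (3/2) √(2t log (t + 1))`.
-/

open MeasureTheory ProbabilityTheory Real Finset
open scoped ENNReal

lemma exp_sub_one_le_mul_exp (y : ℝ) : exp y - 1 ≤ y * exp y := by
  have := mul_le_mul_of_nonneg_right (one_sub_le_exp_neg y) (exp_pos y).le
  rw [← exp_add, neg_add_cancel, exp_zero] at this
  linarith

lemma one_add_pow_sub_one_le {x : ℝ} (hx : 0 ≤ x) (t : ℕ) :
    (1 + x) ^ t - 1 ≤ t * x * exp (t * x) := by
  have h : (1 + x) ^ t ≤ exp (t * x) := by
    rw [exp_nat_mul]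
    exact pow_le_pow_left₀ (by linarith) (by linarith [add_one_le_exp x]) t
  linarith [exp_sub_one_le_mul_exp (t * x)]

lemma exists_pos_exp_le_two_and_log_add_le {t : ℕ} (ht : 1 ≤ t) :
    ∃ l : ℝ, 0 < l ∧ exp l ≤ 2 ∧ ∀ p : ℝ, 0 ≤ p → p ≤ 1 →
      log (t + 1) + t * (exp l - 1) * p ≤ l * (t * p + 2 * √(2 * t * log (t + 1))) := by
  set L := log (t + 1)
  set c := √(2 * t * L)
  have ht0 : (0 : ℝ) < t := by exact_mod_cast ht
  have hL : 0 < L := log_pos (by linarith)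
  have hLt : L ≤ t * log 2 := by
    rw [← log_pow]
    exact log_le_log (by positivity) (by exact_mod_cast Nat.lt_two_pow_self)
  have hc2 : c ^ 2 = 2 * t * L := sq_sqrt (by positivity)
  have hc : 0 < c := sqrt_pos.2 (by positivity)
  set l := c / (2 * t)
  have hl : 0 < l := by positivity
  have hcl : c * l = L := by
    rw [← mul_div_assoc, ← sq, hc2]
    field_simp
  have htl : t * l ^ 2 = L / 2 := by
    rw [div_pow, hc2]
    field_simp
  have hl_sq : l ^ 2 ≤ log 2 / 2 := le_of_mul_le_mul_left (by linarith) ht0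
  have hl2 : l ≤ log 2 := (pow_le_pow_iff_left₀ hl.le (log_nonneg one_le_two) two_ne_zero).1
    (by nlinarith [log_two_gt_d9])
  have hu : exp l - 1 ≤ l + l ^ 2 := by
    have := abs_exp_sub_one_sub_id_le (x := l) (by rw [abs_of_pos hl]; linarith [log_two_lt_d9])
    linarith [le_abs_self (exp l - 1 - l)]
  refine ⟨l, hl, by simpa [exp_log] using exp_le_exp.2 hl2, fun p hp0 hp1 => ?_⟩
  nlinarith [mul_le_mul_of_nonneg_left hu (mul_nonneg ht0.le hp0),
    mul_le_mul_of_nonneg_left hp1 (by positivity : (0 : ℝ) ≤ t * l ^ 2)]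

lemma mgf_indicator_one {Ω : Type*} [MeasurableSpace Ω] {μ : Measure Ω} [IsProbabilityMeasure μ]
    {S : Set Ω} (hS : MeasurableSet S) (l : ℝ) :
    mgf (S.indicator 1) μ l = 1 + μ.real S * (exp l - 1) := by
  have : (fun ω => exp (l * S.indicator 1 ω))
      = fun ω => 1 + S.indicator (fun _ => exp l - 1) ω := by
    ext ω
    by_cases h : ω ∈ S <;> simp [h]
  rw [mgf, this, integral_add (integrable_const 1) ((integrable_const _).indicator hS),
    integral_indicator_const _ hS]
  simp [mul_comm]

lemma integral_le_of_ofReal_le_tsum {Ω ι : Type*} [MeasurableSpace Ω] {μ : Measure Ω}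
    [Countable ι] {Z : Ω → ℝ} {Y : ι → Ω → ℝ} (hZ : AEMeasurable Z μ) (hZ0 : ∀ ω, 0 ≤ Z ω)
    (hY : ∀ i, Integrable (Y i) μ) (hY0 : ∀ i ω, 0 ≤ Y i ω)
    (hZY : ∀ ω, ENNReal.ofReal (Z ω) ≤ ∑' i, ENNReal.ofReal (Y i ω))
    {C : ℝ} (hC : 0 ≤ C) {w : ι → ℝ≥0∞} (hw : ∑' i, w i ≤ 1)
    (hYw : ∀ i, ∫ ω, Y i ω ∂μ ≤ C * (w i).toReal) :
    ∫ ω, Z ω ∂μ ≤ C := by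
  rw [integral_eq_lintegral_of_nonneg_ae (ae_of_all _ hZ0) hZ.aestronglyMeasurable]
  refine ENNReal.toReal_le_of_le_ofReal hC ?_
  calc ∫⁻ ω, ENNReal.ofReal (Z ω) ∂μ
      ≤ ∫⁻ ω, ∑' i, ENNReal.ofReal (Y i ω) ∂μ := lintegral_mono hZY
    _ = ∑' i, ENNReal.ofReal (∫ ω, Y i ω ∂μ) := by
      rw [lintegral_tsum fun i => (hY i).aemeasurable.ennreal_ofReal]
      exact tsum_congr fun i =>
        (ofReal_integral_eq_lintegral_ofReal (hY i) (ae_of_all _ (hY0 i))).symm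
    _ ≤ ∑' i, ENNReal.ofReal C * w i := by
      refine ENNReal.tsum_le_tsum fun i => ?_
      have hwi : w i ≠ ∞ := ne_top_of_le_ne_top ENNReal.one_ne_top (ENNReal.le_tsum i |>.trans hw)
      rw [← ENNReal.ofReal_toReal hwi, ← ENNReal.ofReal_mul hC]
      exact ENNReal.ofReal_le_ofReal (hYw i)
    _ ≤ ENNReal.ofReal C := by
      rw [ENNReal.tsum_mul_left]
      exact mul_le_of_le_one_right' hw

section Visits

variable {Ω α : Type*} [DecidableEq α]

def visits (X : ℕ → Ω → α) (t : ℕ) (a : α) (ω : Ω) : ℕ := #{i ∈ range t | X i ω = a}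

lemma visits_le (X : ℕ → Ω → α) (t : ℕ) (a : α) (ω : Ω) : visits X t a ω ≤ t :=
  (card_filter_le _ _).trans (card_range t).le

lemma natCast_visits (X : ℕ → Ω → α) (t : ℕ) (a : α) :
    (fun ω => (visits X t a ω : ℝ)) = ∑ i ∈ range t, (X i ⁻¹' {a}).indicator 1 := by
  ext ω
  rw [visits, card_filter, Nat.cast_sum, Finset.sum_apply]
  refine sum_congr rfl fun i _ => ?_
  by_cases h : X i ω = a <;> simp [h]

lemma measurable_visits [MeasurableSpace Ω] [MeasurableSpace α] [MeasurableSingletonClass α]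
    {X : ℕ → Ω → α} (hX : ∀ i, Measurable (X i)) (t : ℕ) (a : α) :
    Measurable fun ω => (visits X t a ω : ℝ) := by
  rw [natCast_visits, Finset.sum_fn]
  exact Finset.measurable_sum _ fun i _ =>
    (measurable_one : Measurable (1 : Ω → ℝ)).indicator (hX i (measurableSet_singleton a))

lemma finite_range_visits (X : ℕ → Ω → α) (t : ℕ) (s : Set α) (ω : Ω) :
    (Set.range fun a : s => (visits X t a ω : ℝ)).Finite :=
  ((Set.finite_Iic t).image (Nat.cast : ℕ → ℝ)).subset <| by
    rintro _ ⟨a, rfl⟩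
    exact ⟨_, visits_le X t a ω, rfl⟩

lemma iSup_visits_mem_Icc (X : ℕ → Ω → α) (t : ℕ) (s : Set α) (ω : Ω) :
    ⨆ a : s, (visits X t a ω : ℝ) ∈ Set.Icc 0 (t : ℝ) :=
  ⟨Real.iSup_nonneg fun _ => Nat.cast_nonneg _,
    Real.iSup_le (fun a => by exact_mod_cast visits_le X t a ω) t.cast_nonneg⟩

lemma ofReal_exp_mul_iSup_visits_sub_one_le (X : ℕ → Ω → α) (t : ℕ) (s : Set α) (l : ℝ)
    (ω : Ω) :
    ENNReal.ofReal (exp (l * ⨆ a : s, (visits X t a ω : ℝ)) - 1)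
      ≤ ∑' a : s, ENNReal.ofReal (exp (l * visits X t a ω) - 1) := by
  cases isEmpty_or_nonempty s
  · simp [Real.iSup_of_isEmpty]
  · obtain ⟨a, ha⟩ := (Set.range_nonempty _).csSup_mem (finite_range_visits X t s ω)
    rw [iSup, ← ha]
    exact ENNReal.le_tsum a

end Visits

section IID

variable {Ω α : Type*} [MeasurableSpace Ω] [MeasurableSpace α] [MeasurableSingletonClass α]
  [DecidableEq α] {μ : Measure Ω} [IsProbabilityMeasure μ] {X : ℕ → Ω → α}

lemma mgf_visits (hX : ∀ i, Measurable (X i)) (hindep : iIndepFun X μ)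
    (hident : ∀ i, IdentDistrib (X i) (X 0) μ μ) (t : ℕ) (a : α) (l : ℝ) :
    mgf (fun ω => (visits X t a ω : ℝ)) μ l = (1 + μ.real (X 0 ⁻¹' {a}) * (exp l - 1)) ^ t := by
  have hmeas : ∀ i, Measurable ((X i ⁻¹' {a}).indicator (1 : Ω → ℝ)) := fun i =>
    measurable_one.indicator (hX i (measurableSet_singleton a))
  have hind : iIndepFun (fun i => (X i ⁻¹' {a}).indicator (1 : Ω → ℝ)) μ :=
    hindep.comp (fun _ => ({a} : Set α).indicator 1) fun _ =>
      measurable_one.indicator (measurableSet_singleton a)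
  have hprob : ∀ i, μ.real (X i ⁻¹' {a}) = μ.real (X 0 ⁻¹' {a}) := fun i => by
    simp only [Measure.real, (hident i).measure_mem_eq (measurableSet_singleton a)]
  rw [natCast_visits, hind.mgf_sum hmeas, prod_congr rfl fun i _ => by
    rw [mgf_indicator_one (hX i (measurableSet_singleton a)), hprob], prod_const, card_range]

lemma integral_exp_mul_visits_sub_one_le (hX : ∀ i, Measurable (X i)) (hindep : iIndepFun X μ)
    (hident : ∀ i, IdentDistrib (X i) (X 0) μ μ) (t : ℕ) (a : α) {l p : ℝ} (hl : 0 ≤ l)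
    (hp : μ.real (X 0 ⁻¹' {a}) ≤ p) :
    ∫ ω, (exp (l * visits X t a ω) - 1) ∂μ
      ≤ t * (exp l - 1) * exp (t * (exp l - 1) * p) * μ.real (X 0 ⁻¹' {a}) := by
  have hu : 0 ≤ exp l - 1 := by linarith [one_le_exp hl]
  have hP : 0 ≤ μ.real (X 0 ⁻¹' {a}) := measureReal_nonneg
  rw [integral_sub (integrable_exp_mul_of_le l t hl (measurable_visits hX t a).aemeasurable
    (ae_of_all _ fun ω => by exact_mod_cast visits_le X t a ω)) (integrable_const 1),
    ← mgf, mgf_visits hX hindep hident, integral_const, probReal_univ, one_smul]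
  calc (1 + μ.real (X 0 ⁻¹' {a}) * (exp l - 1)) ^ t - 1
      ≤ t * (μ.real (X 0 ⁻¹' {a}) * (exp l - 1)) * exp (t * (μ.real (X 0 ⁻¹' {a}) * (exp l - 1))) :=
        one_add_pow_sub_one_le (mul_nonneg hP hu) t
    _ ≤ t * (μ.real (X 0 ⁻¹' {a}) * (exp l - 1)) * exp (t * (exp l - 1) * p) := by
        refine mul_le_mul_of_nonneg_left (exp_le_exp.2 ?_) (by positivity)
        nlinarith [mul_le_mul_of_nonneg_left hp (mul_nonneg t.cast_nonneg hu)]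
    _ = _ := by ring

end IID

section IIDSup

variable {Ω α : Type*} [MeasurableSpace Ω] [MeasurableSpace α] [MeasurableSingletonClass α]
  [Countable α] [DecidableEq α] {μ : Measure Ω} [IsProbabilityMeasure μ] {X : ℕ → Ω → α}

lemma measurable_iSup_visits (hX : ∀ i, Measurable (X i)) (t : ℕ) (s : Set α) :
    Measurable fun ω => ⨆ a : s, (visits X t a ω : ℝ) :=
  Measurable.iSup fun a => measurable_visits hX t a

lemma integral_exp_mul_iSup_visits_le (hX : ∀ i, Measurable (X i)) (hindep : iIndepFun X μ)
    (hident : ∀ i, IdentDistrib (X i) (X 0) μ μ) (t : ℕ) (s : Set α) {l p : ℝ} (hl : 0 ≤ l)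
    (hp : ∀ a ∈ s, μ.real (X 0 ⁻¹' {a}) ≤ p) :
    ∫ ω, exp (l * ⨆ a : s, (visits X t a ω : ℝ)) ∂μ
      ≤ 1 + t * (exp l - 1) * exp (t * (exp l - 1) * p) := by
  have hu : 0 ≤ exp l - 1 := by linarith [one_le_exp hl]
  have hexp : ∀ x : ℝ, 0 ≤ x → 0 ≤ exp (l * x) - 1 := fun x hx => by
    linarith [one_le_exp (mul_nonneg hl hx)]
  have hint : ∀ f : Ω → ℝ, Measurable f → (∀ ω, f ω ∈ Set.Icc 0 (t : ℝ)) →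
      Integrable (fun ω => exp (l * f ω)) μ := fun f hf hft =>
    integrable_exp_mul_of_mem_Icc hf.aemeasurable (ae_of_all _ hft)
  have hfiber : ∑' a : s, μ (X 0 ⁻¹' {(a : α)}) ≤ 1 := by
    rw [tsum_measure_preimage_singleton s.to_countable fun a _ => hX 0 (measurableSet_singleton a)]
    exact prob_le_one
  have hsum := integral_le_of_ofReal_le_tsum
    (Z := fun ω => exp (l * ⨆ a : s, (visits X t a ω : ℝ)) - 1)
    (Y := fun (a : s) ω => exp (l * visits X t a ω) - 1)
    (((measurable_iSup_visits hX t s).const_mul l).exp.sub_const 1).aemeasurable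
    (fun ω => hexp _ (iSup_visits_mem_Icc X t s ω).1)
    (fun a => (hint _ (measurable_visits hX t a) fun ω =>
      ⟨Nat.cast_nonneg _, by exact_mod_cast visits_le X t a ω⟩).sub (integrable_const 1))
    (fun a ω => hexp _ (Nat.cast_nonneg _))
    (ofReal_exp_mul_iSup_visits_sub_one_le X t s l)
    (by positivity) hfiber
    (fun a => integral_exp_mul_visits_sub_one_le hX hindep hident t a hl (hp a a.2))
  rw [integral_sub (hint _ (measurable_iSup_visits hX t s) (iSup_visits_mem_Icc X t s))
    (integrable_const 1), integral_const, probReal_univ, one_smul] at hsum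
  linarith

lemma mul_integral_iSup_visits_le (hX : ∀ i, Measurable (X i)) (hindep : iIndepFun X μ)
    (hident : ∀ i, IdentDistrib (X i) (X 0) μ μ) (t : ℕ) (s : Set α) {l p : ℝ} (hl : 0 ≤ l)
    (hl2 : exp l ≤ 2) (hp0 : 0 ≤ p) (hp : ∀ a ∈ s, μ.real (X 0 ⁻¹' {a}) ≤ p) :
    l * ∫ ω, ⨆ a : s, (visits X t a ω : ℝ) ∂μ ≤ log (t + 1) + t * (exp l - 1) * p := by
  set M := fun ω => ⨆ a : s, (visits X t a ω : ℝ)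
  have hM : Integrable M μ := Integrable.of_mem_Icc 0 t
    (measurable_iSup_visits hX t s).aemeasurable (ae_of_all _ (iSup_visits_mem_Icc X t s))
  have hjensen : exp (∫ ω, l * M ω ∂μ) ≤ ∫ ω, exp (l * M ω) ∂μ :=
    convexOn_exp.map_integral_le continuous_exp.continuousOn isClosed_univ
      (ae_of_all _ fun _ => trivial) (hM.const_mul l)
      (integrable_exp_mul_of_mem_Icc (measurable_iSup_visits hX t s).aemeasurable
        (ae_of_all _ (iSup_visits_mem_Icc X t s)))
  have hE : 1 ≤ exp (t * (exp l - 1) * p) :=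
    one_le_exp (mul_nonneg (mul_nonneg t.cast_nonneg (by linarith [one_le_exp hl])) hp0)
  have hmgf : exp (l * ∫ ω, M ω ∂μ) ≤ exp (log (t + 1) + t * (exp l - 1) * p) := by
    rw [← integral_const_mul, exp_add, exp_log (by positivity)]
    refine hjensen.trans <| (integral_exp_mul_iSup_visits_le hX hindep hident t s hl hp).trans ?_
    nlinarith [mul_nonneg (mul_nonneg t.cast_nonneg (exp_pos (t * (exp l - 1) * p)).le)
      (sub_nonneg.2 hl2)]
  exact exp_le_exp.1 hmgf

lemma integral_iSup_visits_le (hX : ∀ i, Measurable (X i)) (hindep : iIndepFun X μ)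
    (hident : ∀ i, IdentDistrib (X i) (X 0) μ μ) (s : Set α) {t : ℕ} (ht : 1 ≤ t) :
    ∫ ω, ⨆ a : s, (visits X t a ω : ℝ) ∂μ
      ≤ t * (⨆ a : s, μ.real (X 0 ⁻¹' {(a : α)})) + 2 * √(2 * t * log (t + 1)) := by
  set p := ⨆ a : s, μ.real (X 0 ⁻¹' {(a : α)})
  have hp0 : 0 ≤ p := Real.iSup_nonneg fun _ => measureReal_nonneg
  have hp1 : p ≤ 1 := Real.iSup_le (fun _ => measureReal_le_one) zero_le_one
  have hp : ∀ a ∈ s, μ.real (X 0 ⁻¹' {a}) ≤ p := fun a ha =>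
    le_ciSup (f := fun a : s => μ.real (X 0 ⁻¹' {(a : α)}))
      ⟨1, by rintro _ ⟨b, rfl⟩; exact measureReal_le_one⟩ ⟨a, ha⟩
  obtain ⟨l, hl, hl2, hlog⟩ := exists_pos_exp_le_two_and_log_add_le ht
  refine le_of_mul_le_mul_left ?_ hl
  exact (mul_integral_iSup_visits_le hX hindep hident t s hl.le hl2 hp0 hp).trans (hlog p hp0 hp1)

end IIDSup

theorem stmt_17 {Ω α : Type*} {m : MeasurableSpace Ω}
    [MeasurableSpace α] [MeasurableSingletonClass α] [Countable α] [DecidableEq α]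
    (μ : Measure Ω) [IsProbabilityMeasure μ]
    (X : ℕ → Ω → α) (hX : ∀ i, Measurable (X i))
    (hindep : iIndepFun X μ)
    (hident : ∀ i, IdentDistrib (X i) (X 0) μ μ)
    (r : α) (t : ℕ) (ht : 1 ≤ t) :
    ∫ ω, (⨆ a : {b : α // b ≠ r},
        (((Finset.range t).filter (fun i => X i ω = a.1)).card : ℝ)) ∂μ ≤
      t * (⨆ a : {b : α // b ≠ r}, (μ {ω | X 0 ω = a.1}).toReal) +
        2 * Real.sqrt (2 * t * Real.log (t + 1)) :=
  integral_iSup_visits_le hX hindep hident {b | b ≠ r} ht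
end
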